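/- arXiv:1306.5337 — 2 statements merged into one kernel-verified Lean document; each statement's English description precedes it below -/
import Mathlib

section
/- If E ⊆ ℝⁿ is a measurable set and Ω is an open set, then the fractional perimeter Per_σ(E,Ω) := L(E∩Ω, Eᶜ) + L(E\Ω, Ω\E), where L(A,B) = ∫_{A×B} |x−y|^{−(n+σ)} dx dy, is lower semicontinuous with respect to L¹_loc convergence of characteristic functions: if χ_{E_k} → χ_E in L¹(ℝⁿ), then Per_σ(E,Ω) ≤ liminf_k Per_σ(E_k,Ω). -/
/-!
Writing `Per_σ(E,Ω)` as the integral of the kernel `|x-y|^{-(n+σ)}` over a region of `ℝⁿ × ℝⁿ`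
whose indicator at `(x,y)` depends only on whether `x ∈ E` and `y ∈ E`, lower semicontinuity is
Fatou's lemma once the indicators converge almost everywhere. `L¹` convergence of `χ_{E_k}` only
gives this along a subsequence (Borel–Cantelli), which suffices because every subsequence of
`(E_k)` again converges in `L¹`.
-/

open MeasureTheory Metric Set Filter
open scoped ENNReal symmDiff

noncomputable section

/-- The interaction kernel `L(A,B) = ∫_A ∫_B |x-y|^{-(n+σ)} dy dx`. -/
def interL (n : ℕ) (σ : ℝ) (A B : Set (EuclideanSpace ℝ (Fin n))) : ℝ≥0∞ :=
  ∫⁻ x in A, ∫⁻ y in B, ENNReal.ofReal (‖x - y‖ ^ (-((n : ℝ) + σ)))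

/-- The fractional perimeter `Per_σ(E,Ω) = L(E∩Ω, Eᶜ) + L(E\Ω, Ω\E)`. -/
def fracPer (n : ℕ) (σ : ℝ) (E Ω : Set (EuclideanSpace ℝ (Fin n))) : ℝ≥0∞ :=
  interL n σ (E ∩ Ω) Eᶜ + interL n σ (E \ Ω) (Ω \ E)

open scoped Topology

theorem Filter.le_liminf_of_forall_exists_subseq {β : Type*} [CompleteLinearOrder β]
    [DenselyOrdered β] {u : ℕ → β} {a : β}
    (h : ∀ φ : ℕ → ℕ, StrictMono φ → ∃ ψ : ℕ → ℕ, a ≤ liminf (fun k => u (φ (ψ k))) atTop) :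
    a ≤ liminf u atTop := by
  by_contra! hlt
  obtain ⟨b, hub, hba⟩ := exists_between hlt
  obtain ⟨φ, hφ, hφb⟩ := extraction_of_frequently_atTop
    (frequently_lt_of_liminf_lt (by isBoundedDefault) hub)
  obtain ⟨ψ, hψ⟩ := h φ hφ
  have : liminf (fun k => u (φ (ψ k))) atTop ≤ b :=
    (liminf_le_liminf (.of_forall fun k => (hφb (ψ k)).le)).trans_eq (liminf_const b)
  exact (hψ.trans this).not_gt hba

section

variable {α : Type*} [MeasurableSpace α] {μ : Measure α}

theorem exists_subseq_ae_eventually_mem_iff {A : ℕ → Set α} {E : Set α}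
    (h : Tendsto (fun k => μ (A k ∆ E)) atTop (𝓝 0)) :
    ∃ ψ : ℕ → ℕ, StrictMono ψ ∧ ∀ᵐ x ∂μ, ∀ᶠ j in atTop, (x ∈ A (ψ j) ↔ x ∈ E) := by
  have hpos (j : ℕ) : (0 : ℝ≥0∞) < 2⁻¹ ^ j := ENNReal.pow_pos (by norm_num) j
  obtain ⟨ψ, hψ, hsmall⟩ :=
    extraction_forall_of_eventually fun j => h.eventually (gt_mem_nhds (hpos j))
  -- Borel–Cantelli along a subsequence with `μ (A (ψ j) ∆ E) < 2⁻¹ ^ j`.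
  have hsum : ∑' j, μ (A (ψ j) ∆ E) ≠ ∞ := by
    refine ne_top_of_le_ne_top ?_ (ENNReal.tsum_le_tsum fun j => (hsmall j).le)
    simp [ENNReal.tsum_geometric, ENNReal.one_sub_inv_two]
  refine ⟨ψ, hψ, (ae_eventually_notMem hsum).mono fun x hx => hx.mono fun j hj => ?_⟩
  simpa [Set.mem_symmDiff, iff_def, not_or] using hj

theorem setLIntegral_le_liminf_of_ae_eventually_mem_iff {f : α → ℝ≥0∞} (hf : Measurable f)
    {S : ℕ → Set α} {T : Set α} (hS : ∀ k, MeasurableSet (S k)) (hT : MeasurableSet T)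
    (h : ∀ᵐ x ∂μ, ∀ᶠ k in atTop, (x ∈ S k ↔ x ∈ T)) :
    ∫⁻ x in T, f x ∂μ ≤ liminf (fun k => ∫⁻ x in S k, f x ∂μ) atTop := by
  simp only [← lintegral_indicator hT, ← lintegral_indicator (hS _)]
  calc ∫⁻ x, T.indicator f x ∂μ
      = ∫⁻ x, liminf (fun k => (S k).indicator f x) atTop ∂μ := by
        refine lintegral_congr_ae (h.mono fun x hx => ?_)
        exact ((liminf_congr (hx.mono fun k hk => indicator_eq_indicator hk rfl)).trans
          (liminf_const _)).symm
    _ ≤ liminf (fun k => ∫⁻ x, (S k).indicator f x ∂μ) atTop :=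
        lintegral_liminf_le fun k => hf.indicator (hS k)

def perimeterRegion (E Ω : Set α) : Set (α × α) :=
  (E ∩ Ω) ×ˢ Eᶜ ∪ (E \ Ω) ×ˢ (Ω \ E)

theorem MeasurableSet.perimeterRegion {E Ω : Set α} (hE : MeasurableSet E)
    (hΩ : MeasurableSet Ω) : MeasurableSet (perimeterRegion E Ω) :=
  ((hE.inter hΩ).prod hE.compl).union ((hE.diff hΩ).prod (hΩ.diff hE))

theorem ae_eventually_mem_perimeterRegion_iff {A : ℕ → Set α} {E : Set α}
    (Ω : Set α) (h : ∀ᵐ x ∂μ, ∀ᶠ k in atTop, (x ∈ A k ↔ x ∈ E)) :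
    ∀ᵐ p ∂μ.prod μ, ∀ᶠ k in atTop, (p ∈ perimeterRegion (A k) Ω ↔ p ∈ perimeterRegion E Ω) := by
  filter_upwards [Measure.quasiMeasurePreserving_fst.ae h,
    Measure.quasiMeasurePreserving_snd.ae h] with p h₁ h₂
  filter_upwards [h₁, h₂] with k hk₁ hk₂
  simp only [perimeterRegion, mem_union, mem_prod, mem_inter_iff, Set.mem_sdiff, mem_compl_iff,
    hk₁, hk₂]

end

def fracKernel (n : ℕ) (σ : ℝ) (p : EuclideanSpace ℝ (Fin n) × EuclideanSpace ℝ (Fin n)) :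
    ℝ≥0∞ :=
  ENNReal.ofReal (‖p.1 - p.2‖ ^ (-((n : ℝ) + σ)))

theorem measurable_fracKernel (n : ℕ) (σ : ℝ) : Measurable (fracKernel n σ) := by
  unfold fracKernel; fun_prop

theorem interL_eq_setLIntegral_prod (n : ℕ) (σ : ℝ) (A B : Set (EuclideanSpace ℝ (Fin n))) :
    interL n σ A B = ∫⁻ p in A ×ˢ B, fracKernel n σ p := by
  rw [Measure.volume_eq_prod, ← Measure.prod_restrict,
    lintegral_prod _ (measurable_fracKernel n σ).aemeasurable]
  rfl

theorem fracPer_eq_setLIntegral_perimeterRegion (n : ℕ) (σ : ℝ)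
    {E Ω : Set (EuclideanSpace ℝ (Fin n))} (hE : MeasurableSet E) (hΩ : MeasurableSet Ω) :
    fracPer n σ E Ω = ∫⁻ p in perimeterRegion E Ω, fracKernel n σ p := by
  have hdisj : Disjoint ((E ∩ Ω) ×ˢ Eᶜ) ((E \ Ω) ×ˢ (Ω \ E)) :=
    disjoint_left.2 fun _ hp hq => hq.1.2 hp.1.2
  rw [fracPer, interL_eq_setLIntegral_prod, interL_eq_setLIntegral_prod, perimeterRegion,
    lintegral_union ((hE.diff hΩ).prod (hΩ.diff hE)) hdisj]

theorem fracPer_le_liminf_of_ae_eventually_mem_iff (n : ℕ) (σ : ℝ)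
    {Ω E : Set (EuclideanSpace ℝ (Fin n))} (hΩ : MeasurableSet Ω) (hE : MeasurableSet E)
    {A : ℕ → Set (EuclideanSpace ℝ (Fin n))} (hA : ∀ k, MeasurableSet (A k))
    (h : ∀ᵐ x, ∀ᶠ k in atTop, (x ∈ A k ↔ x ∈ E)) :
    fracPer n σ E Ω ≤ liminf (fun k => fracPer n σ (A k) Ω) atTop := by
  simp only [fracPer_eq_setLIntegral_perimeterRegion n σ (hA _) hΩ,
    fracPer_eq_setLIntegral_perimeterRegion n σ hE hΩ, Measure.volume_eq_prod]
  exact setLIntegral_le_liminf_of_ae_eventually_mem_iff (measurable_fracKernel n σ)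
    (fun k => (hA k).perimeterRegion hΩ) (hE.perimeterRegion hΩ)
    (ae_eventually_mem_perimeterRegion_iff Ω h)

theorem fracPer_lowerSemicontinuous_general
    (n : ℕ) (σ : ℝ)
    (Ω : Set (EuclideanSpace ℝ (Fin n))) (hΩ : IsOpen Ω)
    (E : Set (EuclideanSpace ℝ (Fin n))) (hE : MeasurableSet E)
    (Ek : ℕ → Set (EuclideanSpace ℝ (Fin n))) (hEk : ∀ k, MeasurableSet (Ek k))
    (hconv : Tendsto (fun k => volume (Ek k ∆ E)) atTop (nhds 0)) :
    fracPer n σ E Ω ≤ liminf (fun k => fracPer n σ (Ek k) Ω) atTop := by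
  refine le_liminf_of_forall_exists_subseq fun φ hφ => ?_
  obtain ⟨ψ, -, hae⟩ :=
    exists_subseq_ae_eventually_mem_iff (hconv.comp hφ.tendsto_atTop)
  exact ⟨ψ, fracPer_le_liminf_of_ae_eventually_mem_iff n σ hΩ.measurableSet hE
    (fun k => hEk (φ (ψ k))) hae⟩

/-- Lower semicontinuity of the fractional perimeter with respect to `L¹`
convergence of characteristic functions. -/
theorem fracPer_lowerSemicontinuous
    (n : ℕ) (hn : 1 ≤ n) (σ : ℝ) (hσ : σ ∈ Set.Ioo (0 : ℝ) 1)
    (Ω : Set (EuclideanSpace ℝ (Fin n))) (hΩ : IsOpen Ω) (hΩb : Bornology.IsBounded Ω)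
    (E : Set (EuclideanSpace ℝ (Fin n))) (hE : MeasurableSet E)
    (Ek : ℕ → Set (EuclideanSpace ℝ (Fin n))) (hEk : ∀ k, MeasurableSet (Ek k))
    (hconv : Tendsto (fun k => volume (Ek k ∆ E)) atTop (nhds 0)) :
    fracPer n σ E Ω ≤ liminf (fun k => fracPer n σ (Ek k) Ω) atTop :=
  fracPer_lowerSemicontinuous_general n σ Ω hΩ E hE Ek hEk hconv
end
end

section
/- Vitali-type density bound: let A ⊂ B_{3/4}\B_{1/2} ⊂ ℝⁿ be a closed set satisfying |A ∩ B_r(x)| ≥ β rⁿ for every x ∈ ∂A and every r > 0 with B_r(x) ∩ B_{1/2} = ∅. Let S be a measurable set such that every x ∈ S satisfies 6 dist(x, A) < dist(x, ∂B_{1/2}) and x ∉ A implies x lies in B_{d_y/5}(y) where y ∈ ∂A is a closest point to x and d_y = dist(y, ∂B_{1/2}). Then |S| ≤ C(β) |A| with C(β) depending only on n and β. -/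
open MeasureTheory Metric Set
open scoped ENNReal

noncomputable section

/-- The distance from a point `y` with `R ≤ ‖y‖` to the sphere of radius `R > 0`
is at most `‖y‖ - R`. -/
lemma infDist_sphere_le_norm_sub {E : Type*} [NormedAddCommGroup E] [NormedSpace ℝ E]
    (y : E) {R : ℝ} (hR : 0 < R) (hy : R ≤ ‖y‖) :
    infDist y (sphere (0 : E) R) ≤ ‖y‖ - R := by
  have hy0 : (0 : ℝ) < ‖y‖ := lt_of_lt_of_le hR hy
  have hp : (R / ‖y‖) • y ∈ sphere (0 : E) R := by
    simp only [mem_sphere_iff_norm, sub_zero, norm_smul, Real.norm_eq_abs]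
    rw [abs_of_nonneg (by positivity), div_mul_cancel₀ _ hy0.ne']
  calc infDist y (sphere (0 : E) R) ≤ dist y ((R / ‖y‖) • y) := infDist_le_dist_of_mem hp
    _ = ‖(1 - R / ‖y‖) • y‖ := by
        rw [dist_eq_norm, sub_smul, one_smul]
    _ = ‖y‖ - R := by
        rw [norm_smul, Real.norm_eq_abs,
          abs_of_nonneg (by rw [sub_nonneg]; exact (div_le_one hy0).2 hy)]
        field_simp

/-- Vitali-type density bound: if `A ⊂ B_{3/4} \ B_{1/2}` is closed with uniform
density `β` in balls away from `B_{1/2}`, and every point of `S` is close to `A`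
(in the precise sense below), then `|S| ≤ C(β) |A|`. -/
theorem vitali_density_bound (n : ℕ) (hn : 1 ≤ n) (β : ℝ) (hβ : 0 < β) :
    ∃ C : ℝ, 0 < C ∧
      ∀ A S : Set (EuclideanSpace ℝ (Fin n)), IsClosed A →
        A ⊆ closedBall (0 : EuclideanSpace ℝ (Fin n)) (3 / 4) \
              ball (0 : EuclideanSpace ℝ (Fin n)) (1 / 2) →
        (∀ x ∈ frontier A, ∀ r : ℝ, 0 < r →
          Disjoint (ball x r) (ball (0 : EuclideanSpace ℝ (Fin n)) (1 / 2)) →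
          ENNReal.ofReal (β * r ^ n) ≤ volume (A ∩ ball x r)) →
        MeasurableSet S →
        (∀ x ∈ S, 6 * infDist x A < infDist x (sphere (0 : EuclideanSpace ℝ (Fin n)) (1 / 2)) ∧
          (x ∉ A → ∃ y ∈ frontier A, infDist x A = dist x y ∧
            x ∈ ball y (infDist y (sphere (0 : EuclideanSpace ℝ (Fin n)) (1 / 2)) / 5))) →
        volume S ≤ ENNReal.ofReal C * volume A := by
  set E := EuclideanSpace ℝ (Fin n) with hE
  set V : ℝ≥0∞ := volume (ball (0 : E) 1) with hVdef
  have hVtop : V ≠ ∞ := measure_ball_lt_top.ne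
  refine ⟨1 + 5 ^ n * V.toReal / β, by positivity, ?_⟩
  intro A S hA hAsub hdens hSmeas hSprop
  set r : E → ℝ := fun y => infDist y (sphere (0 : E) (1 / 2)) / 5 with hrdef
  -- basic facts about points of the frontier
  have hfr : ∀ y ∈ frontier A, 1 / 2 ≤ dist y (0 : E) ∧ dist y (0 : E) ≤ 3 / 4 ∧
      r y ≤ (dist y (0 : E) - 1 / 2) / 5 := by
    intro y hy
    have hyA : y ∈ A := hA.frontier_subset hy
    obtain ⟨h1, h2⟩ := hAsub hyA
    have h1' : dist y (0 : E) ≤ 3 / 4 := mem_closedBall.1 h1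
    have h2' : 1 / 2 ≤ dist y (0 : E) := not_lt.1 (fun h => h2 (mem_ball.2 h))
    refine ⟨h2', h1', ?_⟩
    have := infDist_sphere_le_norm_sub y (R := 1 / 2) (by norm_num)
      (by rwa [← dist_zero_right])
    rw [← dist_zero_right] at this
    simp only [hrdef]
    linarith [this]
  have hr_le : ∀ a ∈ frontier A, r a ≤ 1 / 20 := by
    intro a ha
    obtain ⟨h1, h2, h3⟩ := hfr a ha
    linarith
  -- Vitali covering lemma
  obtain ⟨u, hut, hdisj, hcov⟩ :=
    Vitali.exists_disjoint_subfamily_covering_enlargement_closedBall (frontier A)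
      (id : E → E) r (1 / 20) hr_le 5 (by norm_num)
  set u' : Set E := {b ∈ u | 0 < r b} with hu'def
  have hu'u : u' ⊆ u := fun b hb => hb.1
  have hdisj' : u'.PairwiseDisjoint fun b => ball b (r b) :=
    (hdisj.subset hu'u).mono fun b => ball_subset_closedBall
  have hcount : u'.Countable :=
    hdisj'.countable_of_isOpen (fun b _ => isOpen_ball) fun b hb => (nonempty_ball.2 hb.2)
  -- the covering of S
  have hScov : S ⊆ A ∪ ⋃ b ∈ u', closedBall b (5 * r b) := by
    intro x hx
    by_cases hxA : x ∈ A
    · exact Or.inl hxA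
    obtain ⟨y, hy, -, hxy⟩ := (hSprop x hx).2 hxA
    have hxy' : x ∈ ball y (r y) := hxy
    have hry : 0 < r y := lt_of_le_of_lt dist_nonneg (mem_ball.1 hxy')
    obtain ⟨b, hbu, hsub⟩ := hcov y hy
    simp only [id] at hsub
    have hxb : x ∈ closedBall b (5 * r b) := hsub (ball_subset_closedBall hxy')
    have hyb : y ∈ closedBall b (5 * r b) := hsub (mem_closedBall_self hry.le)
    have hrb : 0 < r b := by
      by_contra h
      push_neg at h
      have hx0 : dist x b ≤ 0 := le_trans (mem_closedBall.1 hxb) (by linarith)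
      have hy0 : dist y b ≤ 0 := le_trans (mem_closedBall.1 hyb) (by linarith)
      have hxb' : x = b := by
        have := le_antisymm hx0 dist_nonneg; rwa [dist_eq_zero] at this
      have hyb' : y = b := by
        have := le_antisymm hy0 dist_nonneg; rwa [dist_eq_zero] at this
      exact hxA ((hxb'.trans hyb'.symm) ▸ hA.frontier_subset hy)
    exact Or.inr (mem_biUnion ⟨hbu, hrb⟩ hxb)
  set K : ℝ≥0∞ := ENNReal.ofReal (5 ^ n) * V * (ENNReal.ofReal β)⁻¹ with hKdef
  -- estimate for each ball
  have hball : ∀ b ∈ u', volume (closedBall b (5 * r b)) ≤ K * volume (A ∩ ball b (r b)) := by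
    intro b hb
    have hbfr : b ∈ frontier A := hut hb.1
    have hrb : 0 < r b := hb.2
    obtain ⟨hb1, hb2, hb3⟩ := hfr b hbfr
    have hdisjb : Disjoint (ball b (r b)) (ball (0 : E) (1 / 2)) := by
      rw [Set.disjoint_left]
      intro z hz hz2
      have h1 : dist z b < r b := mem_ball.1 hz
      have h2 : dist z (0 : E) < 1 / 2 := mem_ball.1 hz2
      have h3 : dist b (0 : E) ≤ dist b z + dist z (0 : E) := dist_triangle _ _ _
      rw [dist_comm b z] at h3
      linarith
    have hβr := hdens b hbfr (r b) hrb hdisjb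
    have hfin : Module.finrank ℝ E = n := finrank_euclideanSpace_fin
    have hvol : volume (closedBall b (5 * r b))
        = ENNReal.ofReal (5 ^ n) * ENNReal.ofReal (r b ^ n) * V := by
      rw [Measure.addHaar_closedBall _ _ (by positivity : (0:ℝ) ≤ 5 * r b), hfin,
        mul_pow, ENNReal.ofReal_mul (by positivity)]
    have h2 : ENNReal.ofReal β * ENNReal.ofReal (r b ^ n) ≤ volume (A ∩ ball b (r b)) := by
      rw [← ENNReal.ofReal_mul hβ.le]; exact hβr
    have h1 : ENNReal.ofReal (r b ^ n) ≤ (ENNReal.ofReal β)⁻¹ * volume (A ∩ ball b (r b)) := by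
      calc ENNReal.ofReal (r b ^ n)
          = (ENNReal.ofReal β)⁻¹ * (ENNReal.ofReal β * ENNReal.ofReal (r b ^ n)) := by
            rw [← mul_assoc, ENNReal.inv_mul_cancel (ENNReal.ofReal_pos.2 hβ).ne'
              ENNReal.ofReal_ne_top, one_mul]
        _ ≤ (ENNReal.ofReal β)⁻¹ * volume (A ∩ ball b (r b)) := by gcongr
    calc volume (closedBall b (5 * r b))
        = ENNReal.ofReal (5 ^ n) * ENNReal.ofReal (r b ^ n) * V := hvol
      _ ≤ ENNReal.ofReal (5 ^ n) * ((ENNReal.ofReal β)⁻¹ * volume (A ∩ ball b (r b))) * V := by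
          gcongr
      _ = K * volume (A ∩ ball b (r b)) := by
          rw [hKdef]; ring
  -- summing up
  have hdisjA : u'.PairwiseDisjoint fun b => A ∩ ball b (r b) :=
    hdisj'.mono fun b => inter_subset_right
  have hsum : ∑' b : u', volume (A ∩ ball (b : E) (r b)) ≤ volume A := by
    rw [← measure_biUnion hcount hdisjA
      (fun b _ => hA.measurableSet.inter measurableSet_ball)]
    exact measure_mono (iUnion₂_subset fun b _ => inter_subset_left)
  have hmain : volume S ≤ (1 + K) * volume A := by
    calc volume S ≤ volume (A ∪ ⋃ b ∈ u', closedBall b (5 * r b)) :=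
          measure_mono hScov
      _ ≤ volume A + volume (⋃ b ∈ u', closedBall b (5 * r b)) := measure_union_le _ _
      _ ≤ volume A + ∑' b : u', volume (closedBall (b : E) (5 * r b)) := by
          gcongr
          exact measure_biUnion_le _ hcount _
      _ ≤ volume A + ∑' b : u', K * volume (A ∩ ball (b : E) (r b)) := by
          gcongr with b
          exact hball b.1 b.2
      _ = volume A + K * ∑' b : u', volume (A ∩ ball (b : E) (r b)) := by
          rw [ENNReal.tsum_mul_left]
      _ ≤ volume A + K * volume A := by gcongr
      _ = (1 + K) * volume A := by ring
  refine hmain.trans ?_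
  gcongr
  have : ENNReal.ofReal (1 + 5 ^ n * V.toReal / β)
      = 1 + ENNReal.ofReal (5 ^ n * V.toReal / β) := by
    rw [ENNReal.ofReal_add (by norm_num) (by positivity), ENNReal.ofReal_one]
  rw [this]
  gcongr
  rw [hKdef, div_eq_mul_inv, ENNReal.ofReal_mul (by positivity),
    ENNReal.ofReal_mul (by positivity), ENNReal.ofReal_toReal hVtop,
    ENNReal.ofReal_inv_of_pos hβ]
end
end
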